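/- Let X₁,…,Xₙ be i.i.d. with density f_p(x) = p x^{p-1}, 0 < p < 1, on (0,1], and Q = ∑(Xᵢ - X̄)². Then P{Q ≤ x} = O(x^{min(np, n-1)/2}) as x → 0 when np ≠ n-1, and P{Q ≤ x} = O(x^{(n-1)/2} ln(1/x)) when np = n-1. -/

import Mathlib

open MeasureTheory ProbabilityTheory Filter Real Asymptotics Finset Topology

/-!
On `{Q ≤ x}` every `|Xᵢ - X̄|` is at most `√x`, so the sample range is at most `ε = 2√x`.
If the range is at most `ε`, all the `Xᵢ` lie in one window `[kε, (k+2)ε)` with `k ≤ 1/ε`.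
Since `t ↦ t^p` is concave, each `Xᵢ` falls in that window with probability at most
`2 ε^p (k+1)^(p-1)`, so by independence `P{R ≤ ε} ≤ 2^n ε^(np) ∑_{k ≤ 1/ε} (k+1)^(n(p-1))`.
Comparing the sum with `∫₁^{1/ε} t^(n(p-1)) dt` gives `O(ε^(np))`, `O(ε^(n-1))` or
`O(ε^(n-1) log (1/ε))` according as `n(p-1)` is `< -1`, `> -1` or `= -1`.
-/

theorem rpow_sub_rpow_le_rpow_sub_one_mul {a b p : ℝ} (hp1 : p ≤ 1)
    (ha : 0 ≤ a) (hab : a ≤ b) : b ^ p - a ^ p ≤ b ^ (p - 1) * (b - a) := by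
  rcases ha.eq_or_lt with rfl | ha'
  · rcases hab.eq_or_lt with rfl | hb
    · simp
    · simp [← Real.rpow_add_one hb.ne', Real.rpow_nonneg]
  have hb : 0 < b := ha'.trans_le hab
  have key : a * b ^ (p - 1) ≤ a ^ p := by
    calc a * b ^ (p - 1) = a ^ p * a ^ (1 - p) * b ^ (p - 1) := by
          rw [← Real.rpow_add ha', add_sub_cancel, Real.rpow_one]
      _ ≤ a ^ p * b ^ (1 - p) * b ^ (p - 1) := by gcongr
      _ = a ^ p := by rw [mul_assoc, ← Real.rpow_add hb]; simp
  have : b ^ (p - 1) * b = b ^ p := by rw [← Real.rpow_add_one hb.ne']; simp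
  nlinarith

theorem sum_range_rpow_le_one_add_integral {c : ℝ} (hc : c ≤ 0) (K : ℕ) :
    ∑ k ∈ range (K + 1), ((k : ℝ) + 1) ^ c ≤ 1 + ∫ x in (1 : ℝ)..1 + K, x ^ c := by
  have hanti : AntitoneOn (fun x : ℝ => x ^ c) (Set.Icc 1 (1 + K)) := fun x hx y _ hxy =>
    Real.rpow_le_rpow_of_nonpos (by linarith [hx.1]) hxy hc
  rw [sum_range_succ', add_comm]
  simpa [add_assoc, add_comm (1 : ℝ)] using hanti.sum_le_integral

theorem sum_range_rpow_le_of_lt_neg_one {c : ℝ} (hc : c < -1) (K : ℕ) :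
    ∑ k ∈ range (K + 1), ((k : ℝ) + 1) ^ c ≤ 1 - 1 / (c + 1) := by
  refine (sum_range_rpow_le_one_add_integral (by linarith) K).trans ?_
  rw [integral_rpow (Or.inr ⟨hc.ne, Set.notMem_uIcc_of_lt one_pos (by positivity)⟩), one_rpow,
    sub_div]
  have : (1 + (K : ℝ)) ^ (c + 1) / (c + 1) ≤ 0 :=
    div_nonpos_of_nonneg_of_nonpos (by positivity) (by linarith)
  linarith

theorem sum_range_rpow_le_of_neg_one_lt {c : ℝ} (hc : -1 < c) (hc0 : c ≤ 0) (K : ℕ) :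
    ∑ k ∈ range (K + 1), ((k : ℝ) + 1) ^ c ≤ (1 + K) ^ (c + 1) / (c + 1) := by
  refine (sum_range_rpow_le_one_add_integral hc0 K).trans ?_
  rw [integral_rpow (Or.inl hc), one_rpow]
  have hc1 : 0 < c + 1 := by linarith
  rw [sub_div, ← sub_nonneg]
  have : 1 ≤ 1 / (c + 1) := by rw [le_div_iff₀ hc1]; linarith
  linarith

theorem sum_range_rpow_neg_one_le (K : ℕ) :
    ∑ k ∈ range (K + 1), ((k : ℝ) + 1) ^ (-1 : ℝ) ≤ 1 + log (1 + K) := by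
  refine (sum_range_rpow_le_one_add_integral (by norm_num) K).trans ?_
  simp_rw [Real.rpow_neg_one]
  rw [integral_inv_of_pos one_pos (by positivity), div_one]

theorem one_add_floor_one_div_le {ε : ℝ} (hε : 0 < ε) (hε1 : ε ≤ 1) :
    1 + (⌊1 / ε⌋₊ : ℝ) ≤ 2 / ε := by
  have h1 : 1 ≤ 1 / ε := by rwa [le_div_iff₀ hε, one_mul]
  linarith [Nat.floor_le (zero_le_one.trans h1), show 2 / ε = 1 / ε + 1 / ε by ring]

theorem isBigO_sum_range_floor_rpow_of_lt_neg_one {c : ℝ} (hc : c < -1) :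
    (fun ε : ℝ => ∑ k ∈ range (⌊1 / ε⌋₊ + 1), ((k : ℝ) + 1) ^ c) =O[𝓝[>] 0] fun _ => (1 : ℝ) :=
  isBigO_of_le' (c := 1 - 1 / (c + 1)) _ fun ε => by
    rw [norm_one, mul_one, norm_of_nonneg (by positivity)]
    exact sum_range_rpow_le_of_lt_neg_one hc _

theorem isBigO_sum_range_floor_rpow_of_neg_one_lt {c : ℝ} (hc : -1 < c) (hc0 : c ≤ 0) :
    (fun ε : ℝ => ∑ k ∈ range (⌊1 / ε⌋₊ + 1), ((k : ℝ) + 1) ^ c) =O[𝓝[>] 0]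
      fun ε => ε ^ (-(c + 1)) := by
  have hc1 : 0 < c + 1 := by linarith
  refine IsBigO.of_bound (2 ^ (c + 1) / (c + 1)) ?_
  filter_upwards [Ioc_mem_nhdsGT one_pos] with ε ⟨hε, hε1⟩
  rw [norm_of_nonneg (by positivity), norm_of_nonneg (by positivity)]
  calc ∑ k ∈ range (⌊1 / ε⌋₊ + 1), ((k : ℝ) + 1) ^ c
      ≤ (1 + ⌊1 / ε⌋₊) ^ (c + 1) / (c + 1) := sum_range_rpow_le_of_neg_one_lt hc hc0 _
    _ ≤ (2 / ε) ^ (c + 1) / (c + 1) := by gcongr; exact one_add_floor_one_div_le hε hε1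
    _ = 2 ^ (c + 1) / (c + 1) * ε ^ (-(c + 1)) := by
        rw [Real.div_rpow zero_le_two hε.le, Real.rpow_neg hε.le]
        ring

theorem isBigO_sum_range_floor_rpow_neg_one :
    (fun ε : ℝ => ∑ k ∈ range (⌊1 / ε⌋₊ + 1), ((k : ℝ) + 1) ^ (-1 : ℝ)) =O[𝓝[>] 0]
      fun ε => log (1 / ε) := by
  refine IsBigO.of_bound 3 ?_
  filter_upwards [Ioc_mem_nhdsGT (exp_pos (-1))] with ε ⟨hε, hεe⟩
  have hε1 : ε ≤ 1 := hεe.trans (exp_le_one_iff.mpr (by norm_num))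
  have hlog : 1 ≤ log (1 / ε) := by
    have : log ε ≤ -1 := (log_le_iff_le_exp hε).mpr hεe
    rw [one_div, log_inv]
    linarith
  rw [norm_of_nonneg (by positivity), norm_of_nonneg (zero_le_one.trans hlog)]
  calc ∑ k ∈ range (⌊1 / ε⌋₊ + 1), ((k : ℝ) + 1) ^ (-1 : ℝ)
      ≤ 1 + log (1 + ⌊1 / ε⌋₊) := sum_range_rpow_neg_one_le _
    _ ≤ 1 + log (2 / ε) := by
        gcongr
        exact one_add_floor_one_div_le hε hε1
    _ = 1 + log 2 + log (1 / ε) := by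
        rw [div_eq_mul_one_div 2, log_mul two_ne_zero (by positivity), add_assoc]
    _ ≤ 3 * log (1 / ε) := by linarith [log_two_lt_d9]

theorem sub_le_two_mul_sqrt_of_sum_sq_sub_le {ι : Type*} [Fintype ι] {y : ι → ℝ} {c x : ℝ}
    (h : ∑ k, (y k - c) ^ 2 ≤ x) (i j : ι) : y i - y j ≤ 2 * √x := by
  have hdev : ∀ k, |y k - c| ≤ √x := fun k => Real.abs_le_sqrt <|
    (single_le_sum (f := fun k => (y k - c) ^ 2) (fun _ _ => sq_nonneg _) (mem_univ k)).trans h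
  linarith [(abs_le.mp (hdev i)).2, (abs_le.mp (hdev j)).1]

theorem exists_forall_mem_Ico_of_sub_le {ι : Type*} [Finite ι] [Nonempty ι] {y : ι → ℝ}
    (hy : ∀ i, y i ∈ Set.Icc 0 1) {ε : ℝ} (hε : 0 < ε) (hsub : ∀ i j, y i - y j ≤ ε) :
    ∃ k ≤ ⌊1 / ε⌋₊, ∀ i, y i ∈ Set.Ico (k * ε) ((k + 2) * ε) := by
  obtain ⟨j, hj⟩ := Finite.exists_min y
  have hm : 0 ≤ y j / ε := div_nonneg (hy j).1 hε.le
  refine ⟨⌊y j / ε⌋₊, Nat.floor_le_floor (by gcongr; exact (hy j).2), fun i => ⟨?_, ?_⟩⟩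
  · calc ⌊y j / ε⌋₊ * ε ≤ y j := (le_div_iff₀ hε).mp (Nat.floor_le hm)
      _ ≤ y i := hj i
  · calc y i ≤ y j + ε := by linarith [hsub i j]
      _ < (⌊y j / ε⌋₊ + 2) * ε := by
        have := (div_lt_iff₀ hε).mp (Nat.lt_floor_add_one (y j / ε))
        linarith

theorem measure_forall_sub_le_le_sum {Ω ι : Type*} [MeasurableSpace Ω] {μ : Measure Ω}
    [Fintype ι] [Nonempty ι] {X : ι → Ω → ℝ} (hXm : ∀ i, Measurable (X i))
    (hindep : iIndepFun X μ) {ν : Measure ℝ} (hlaw : ∀ i, μ.map (X i) = ν)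
    (hν : ν (Set.Icc 0 1)ᶜ = 0) {ε : ℝ} (hε : 0 < ε) :
    μ {ω | ∀ i j, X i ω - X j ω ≤ ε} ≤
      ∑ k ∈ range (⌊1 / ε⌋₊ + 1), ν (Set.Ico (k * ε) ((k + 2) * ε)) ^ Fintype.card ι := by
  have hpre : ∀ i {s : Set ℝ}, MeasurableSet s → μ (X i ⁻¹' s) = ν s := fun i s hs => by
    rw [← Measure.map_apply (hXm i) hs, hlaw i]
  have hcover : {ω | ∀ i j, X i ω - X j ω ≤ ε} ⊆ (⋃ i, X i ⁻¹' (Set.Icc 0 1)ᶜ) ∪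
      ⋃ k ∈ range (⌊1 / ε⌋₊ + 1), ⋂ i, X i ⁻¹' Set.Ico (k * ε) ((k + 2) * ε) := by
    intro ω hω
    by_cases hmem : ∀ i, X i ω ∈ Set.Icc 0 1
    · obtain ⟨k, hk, hki⟩ := exists_forall_mem_Ico_of_sub_le hmem hε hω
      exact Or.inr (Set.mem_biUnion (mem_range_succ_iff.mpr hk) (Set.mem_iInter.mpr hki))
    · push Not at hmem
      exact Or.inl (Set.mem_iUnion.mpr hmem)
  calc μ {ω | ∀ i j, X i ω - X j ω ≤ ε}
      ≤ μ (⋃ i, X i ⁻¹' (Set.Icc 0 1)ᶜ) +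
          μ (⋃ k ∈ range (⌊1 / ε⌋₊ + 1), ⋂ i, X i ⁻¹' Set.Ico (k * ε) ((k + 2) * ε)) :=
        (measure_mono hcover).trans (measure_union_le _ _)
    _ ≤ 0 + ∑ k ∈ range (⌊1 / ε⌋₊ + 1), μ (⋂ i, X i ⁻¹' Set.Ico (k * ε) ((k + 2) * ε)) := by
        gcongr
        · exact (measure_iUnion_null fun i => by rw [hpre i measurableSet_Icc.compl, hν]).le
        · exact measure_biUnion_finset_le _ _
    _ = ∑ k ∈ range (⌊1 / ε⌋₊ + 1), ν (Set.Ico (k * ε) ((k + 2) * ε)) ^ Fintype.card ι := by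
        rw [zero_add]
        refine sum_congr rfl fun k _ => ?_
        rw [hindep.meas_iInter fun i => ⟨_, measurableSet_Ico, rfl⟩]
        simp [hpre _ measurableSet_Ico]

noncomputable def powerLaw (p : ℝ) : Measure ℝ :=
  (volume.restrict (Set.Ioc 0 1)).withDensity fun x => ENNReal.ofReal (p * x ^ (p - 1))

theorem powerLaw_compl_Icc (p : ℝ) : powerLaw p (Set.Icc 0 1)ᶜ = 0 := by
  rw [powerLaw, withDensity_apply _ measurableSet_Icc.compl,
    Measure.restrict_restrict measurableSet_Icc.compl]
  convert setLIntegral_measure_zero _ _ (measure_empty (μ := volume))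
  exact Set.eq_empty_of_forall_notMem fun x hx => hx.1 (Set.Ioc_subset_Icc_self hx.2)

theorem powerLaw_Ico_le {p a b : ℝ} (hp : 0 < p) (ha : 0 ≤ a) (hab : a ≤ b) :
    powerLaw p (Set.Ico a b) ≤ ENNReal.ofReal (b ^ p - a ^ p) := by
  have hint : IntegrableOn (fun t : ℝ => p * t ^ (p - 1)) (Set.Ioc a b) := by
    rw [← intervalIntegrable_iff_integrableOn_Ioc_of_le hab]
    exact (intervalIntegral.intervalIntegrable_rpow' (by linarith)).const_mul p
  have hnonneg : 0 ≤ᵐ[volume.restrict (Set.Ioc a b)] fun t : ℝ => p * t ^ (p - 1) :=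
    (ae_restrict_iff' measurableSet_Ioc).mpr (ae_of_all _ fun t ht =>
      mul_nonneg hp.le (Real.rpow_nonneg (ha.trans ht.1.le) _))
  calc powerLaw p (Set.Ico a b)
      ≤ ∫⁻ t in Set.Ioc a b, ENNReal.ofReal (p * t ^ (p - 1)) := by
        rw [powerLaw, withDensity_apply _ measurableSet_Ico,
          Measure.restrict_restrict measurableSet_Ico,
          ← Measure.restrict_congr_set Ico_ae_eq_Ioc]
        exact lintegral_mono' (Measure.restrict_mono Set.inter_subset_left le_rfl) le_rfl
    _ = ENNReal.ofReal (b ^ p - a ^ p) := by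
        rw [← ofReal_integral_eq_lintegral_ofReal hint hnonneg,
          ← intervalIntegral.integral_of_le hab,
          intervalIntegral.integral_const_mul, integral_rpow (Or.inl (by linarith)),
          sub_add_cancel, mul_div_cancel₀ _ hp.ne']

theorem powerLaw_Ico_nat_mul_le {p ε : ℝ} (hp : 0 < p) (hp1 : p ≤ 1) (hε : 0 < ε) (k : ℕ) :
    powerLaw p (Set.Ico (k * ε) ((k + 2) * ε)) ≤
      ENNReal.ofReal (2 * ε ^ p * (k + 1) ^ (p - 1)) := by
  refine (powerLaw_Ico_le hp (by positivity) (by gcongr; norm_num)).trans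
    (ENNReal.ofReal_le_ofReal ?_)
  calc ((k + 2) * ε) ^ p - (k * ε) ^ p ≤ ((k + 2) * ε) ^ (p - 1) * ((k + 2) * ε - k * ε) :=
        rpow_sub_rpow_le_rpow_sub_one_mul hp1 (by positivity) (by gcongr; norm_num)
    _ = 2 * ε ^ p * ((k : ℝ) + 2) ^ (p - 1) := by
        rw [Real.mul_rpow (by positivity) hε.le, Real.rpow_sub_one hε.ne']
        field_simp
        ring
    _ ≤ 2 * ε ^ p * (k + 1) ^ (p - 1) := by
        gcongr 2 * ε ^ p * ?_
        exact Real.rpow_le_rpow_of_nonpos (by positivity) (by linarith) (by linarith)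

section PowerLawSample

variable {Ω : Type*} [MeasurableSpace Ω] {μ : Measure Ω} {p : ℝ} {n : ℕ} [NeZero n]
  {X : Fin n → Ω → ℝ}

theorem measure_forall_sub_le_le_of_powerLaw (hp : 0 < p) (hp1 : p ≤ 1)
    (hXm : ∀ i, Measurable (X i)) (hindep : iIndepFun X μ)
    (hlaw : ∀ i, μ.map (X i) = powerLaw p) {ε : ℝ} (hε : 0 < ε) :
    (μ {ω | ∀ i j, X i ω - X j ω ≤ ε}).toReal ≤
      2 ^ n * ε ^ (p * n) * ∑ k ∈ range (⌊1 / ε⌋₊ + 1), ((k : ℝ) + 1) ^ ((p - 1) * n) := by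
  have hterm : ∀ k : ℕ, (2 * ε ^ p * ((k : ℝ) + 1) ^ (p - 1)) ^ n =
      2 ^ n * ε ^ (p * n) * ((k : ℝ) + 1) ^ ((p - 1) * n) := fun k => by
    rw [Real.rpow_mul_natCast hε.le, Real.rpow_mul_natCast (by positivity), mul_pow, mul_pow]
  rw [mul_sum]
  refine ENNReal.toReal_le_of_le_ofReal (by positivity) ?_
  calc μ {ω | ∀ i j, X i ω - X j ω ≤ ε}
      ≤ ∑ k ∈ range (⌊1 / ε⌋₊ + 1), powerLaw p (Set.Ico (k * ε) ((k + 2) * ε)) ^ n := by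
        simpa using measure_forall_sub_le_le_sum hXm hindep hlaw (powerLaw_compl_Icc p) hε
    _ ≤ ∑ k ∈ range (⌊1 / ε⌋₊ + 1), ENNReal.ofReal ((2 * ε ^ p * ((k : ℝ) + 1) ^ (p - 1)) ^ n) := by
        gcongr with k
        rw [ENNReal.ofReal_pow (by positivity)]
        gcongr
        exact powerLaw_Ico_nat_mul_le hp hp1 hε k
    _ = _ := by
        rw [← ENNReal.ofReal_sum_of_nonneg fun k _ => by positivity]
        simp_rw [hterm]

theorem isBigO_measure_forall_sub_le_of_powerLaw (hp : 0 < p) (hp1 : p ≤ 1)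
    (hXm : ∀ i, Measurable (X i)) (hindep : iIndepFun X μ)
    (hlaw : ∀ i, μ.map (X i) = powerLaw p) :
    (fun ε => (μ {ω | ∀ i j, X i ω - X j ω ≤ ε}).toReal) =O[𝓝[>] 0]
      fun ε => ε ^ (p * n) * ∑ k ∈ range (⌊1 / ε⌋₊ + 1), ((k : ℝ) + 1) ^ ((p - 1) * n) := by
  refine IsBigO.of_bound (2 ^ n) (eventually_nhdsWithin_of_forall fun ε (hε : 0 < ε) => ?_)
  rw [norm_of_nonneg ENNReal.toReal_nonneg, norm_of_nonneg (by positivity), ← mul_assoc]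
  exact measure_forall_sub_le_le_of_powerLaw hp hp1 hXm hindep hlaw hε

theorem isBigO_measure_forall_sub_le_of_powerLaw_of_ne (hp : 0 < p) (hp1 : p ≤ 1)
    (hXm : ∀ i, Measurable (X i)) (hindep : iIndepFun X μ)
    (hlaw : ∀ i, μ.map (X i) = powerLaw p) (hne : (n : ℝ) * p ≠ n - 1) :
    (fun ε => (μ {ω | ∀ i j, X i ω - X j ω ≤ ε}).toReal) =O[𝓝[>] 0]
      fun ε => ε ^ min ((n : ℝ) * p) (n - 1) := by
  refine (isBigO_measure_forall_sub_le_of_powerLaw hp hp1 hXm hindep hlaw).trans ?_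
  rcases hne.lt_or_gt with hlt | hgt
  · rw [min_eq_left hlt.le, mul_comm (n : ℝ) p]
    simpa using (isBigO_refl (fun ε : ℝ => ε ^ (p * n)) _).mul
      (isBigO_sum_range_floor_rpow_of_lt_neg_one (c := (p - 1) * n) (by linarith))
  · rw [min_eq_right hgt.le]
    refine ((isBigO_refl (fun ε : ℝ => ε ^ (p * n)) _).mul
      (isBigO_sum_range_floor_rpow_of_neg_one_lt (c := (p - 1) * n) (by linarith)
        (mul_nonpos_of_nonpos_of_nonneg (by linarith) n.cast_nonneg))).trans_eventuallyEq ?_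
    filter_upwards [self_mem_nhdsWithin] with ε hε
    rw [← rpow_add hε]
    ring_nf

theorem isBigO_measure_forall_sub_le_of_powerLaw_of_eq (hp : 0 < p) (hp1 : p ≤ 1)
    (hXm : ∀ i, Measurable (X i)) (hindep : iIndepFun X μ)
    (hlaw : ∀ i, μ.map (X i) = powerLaw p) (heq : (n : ℝ) * p = n - 1) :
    (fun ε => (μ {ω | ∀ i j, X i ω - X j ω ≤ ε}).toReal) =O[𝓝[>] 0]
      fun ε => ε ^ ((n : ℝ) - 1) * log (1 / ε) := by
  have hsum := isBigO_sum_range_floor_rpow_neg_one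
  rw [show (-1 : ℝ) = (p - 1) * n by linarith] at hsum
  rw [show (n : ℝ) - 1 = p * n by linarith]
  exact (isBigO_measure_forall_sub_le_of_powerLaw hp hp1 hXm hindep hlaw).trans
    ((isBigO_refl _ _).mul hsum)

end PowerLawSample

theorem tendsto_two_mul_sqrt_nhdsGT : Tendsto (fun x : ℝ => 2 * √x) (𝓝[>] 0) (𝓝[>] 0) := by
  refine tendsto_nhdsWithin_iff.mpr ⟨?_, eventually_nhdsWithin_of_forall fun x hx => ?_⟩
  · have : Tendsto (fun x : ℝ => 2 * √x) (𝓝 0) (𝓝 (2 * √0)) :=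
      (continuous_const.mul continuous_sqrt).tendsto 0
    simpa using this.mono_left nhdsWithin_le_nhds
  · exact mul_pos two_pos (sqrt_pos.mpr hx)

theorem isBigO_two_mul_sqrt_rpow (a : ℝ) :
    (fun x : ℝ => (2 * √x) ^ a) =O[𝓝[>] 0] fun x => x ^ (a / 2) := by
  refine IsBigO.of_bound (2 ^ a) (eventually_nhdsWithin_of_forall fun x hx => ?_)
  rw [Real.mul_rpow zero_le_two (sqrt_nonneg x), sqrt_eq_rpow, ← Real.rpow_mul (le_of_lt hx),
    one_div_mul_eq_div, norm_mul, norm_of_nonneg (by positivity : (0:ℝ) ≤ 2 ^ a)]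

theorem isBigO_log_one_div_two_mul_sqrt :
    (fun x : ℝ => log (1 / (2 * √x))) =O[𝓝[>] 0] fun x => log (1 / x) := by
  refine IsBigO.of_bound' ?_
  filter_upwards [Ioo_mem_nhdsGT (show (0 : ℝ) < 1 / 4 by norm_num)] with x ⟨hx, hx4⟩
  have hs : 0 < √x := sqrt_pos.mpr hx
  have hsx : √x * √x = x := mul_self_sqrt hx.le
  have hs2 : √x < 1 / 2 := by nlinarith
  have hlow : 0 ≤ log (1 / (2 * √x)) := log_nonneg (by rw [le_div_iff₀ (by positivity)]; linarith)
  have hle : log (1 / (2 * √x)) ≤ log (1 / x) := by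
    refine log_le_log (by positivity) ?_
    rw [div_le_div_iff₀ (by positivity) hx]
    nlinarith
  rw [norm_of_nonneg hlow, norm_of_nonneg (hlow.trans hle)]
  exact hle

theorem cdf_Q_small_x_estimate
    {Ω : Type*} [MeasurableSpace Ω] (μ : Measure Ω) [IsProbabilityMeasure μ]
    (p : ℝ) (hp : 0 < p) (hp1 : p < 1) (n : ℕ) (hn : 2 ≤ n)
    (X : Fin n → Ω → ℝ) (hXm : ∀ i, Measurable (X i))
    (hindep : iIndepFun X μ)
    (hlaw : ∀ i, Measure.map (X i) μ =
      (volume.restrict (Set.Ioc (0:ℝ) 1)).withDensity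
        (fun x => ENNReal.ofReal (p * x ^ (p - 1))))
    (Q : Ω → ℝ) (hQ : ∀ ω, Q ω = ∑ i, (X i ω - (∑ j, X j ω) / n)^2) :
    ((n : ℝ) * p ≠ (n : ℝ) - 1 →
      (fun x : ℝ => (μ {ω | Q ω ≤ x}).toReal) =O[nhdsWithin 0 (Set.Ioi 0)]
        (fun x : ℝ => x ^ (min ((n:ℝ) * p) ((n:ℝ) - 1) / 2))) ∧
    ((n : ℝ) * p = (n : ℝ) - 1 →
      (fun x : ℝ => (μ {ω | Q ω ≤ x}).toReal) =O[nhdsWithin 0 (Set.Ioi 0)]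
        (fun x : ℝ => x ^ (((n:ℝ) - 1) / 2) * Real.log (1/x))) := by
  have : NeZero n := ⟨by omega⟩
  have hQ_range : (fun x => (μ {ω | Q ω ≤ x}).toReal) =O[𝓝[>] 0]
      fun x => (μ {ω | ∀ i j, X i ω - X j ω ≤ 2 * √x}).toReal :=
    IsBigO.of_bound' <| Eventually.of_forall fun x => by
      rw [norm_of_nonneg ENNReal.toReal_nonneg, norm_of_nonneg ENNReal.toReal_nonneg]
      refine ENNReal.toReal_mono (measure_ne_top _ _) (measure_mono fun ω hω => ?_)
      exact sub_le_two_mul_sqrt_of_sum_sq_sub_le ((hQ ω).symm.trans_le hω)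
  refine ⟨fun hne => hQ_range.trans ?_, fun heq => hQ_range.trans ?_⟩
  · have hR := isBigO_measure_forall_sub_le_of_powerLaw_of_ne hp hp1.le hXm hindep hlaw hne
    exact (hR.comp_tendsto tendsto_two_mul_sqrt_nhdsGT).trans (isBigO_two_mul_sqrt_rpow _)
  · have hR := isBigO_measure_forall_sub_le_of_powerLaw_of_eq hp hp1.le hXm hindep hlaw heq
    exact (hR.comp_tendsto tendsto_two_mul_sqrt_nhdsGT).trans
      ((isBigO_two_mul_sqrt_rpow _).mul isBigO_log_one_div_two_mul_sqrt)
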